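/- Let (Ω, ℱ, P) be a probability space and let B, S, T, ε be random variables on Ω taking values in finite sets. Suppose: (i) ε is independent of the triple (B, S, T); (ii) there exist functions f and g such that M := f(B, ε) satisfies B = g(M, ε) almost surely; and (iii) there exist functions k and h such that S* := k(S, ε) satisfies (S, ε) = h(S*) almost surely. Then I(M ; S* | T) − I(B ; S | T) = H(ε) − H(ε | M, T) ≥ 0. -/

import Mathlib

open MeasureTheory ProbabilityTheory

/-- Shannon entropy of a finitely-valued random variable `X` under `μ`:
`H(X) = Σ_a (−P(X=a) log P(X=a))`. -/
noncomputable def finEntropy {Ω : Type*} [MeasurableSpace Ω] {α : Type*} [Fintype α]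
    (μ : Measure Ω) (X : Ω → α) : ℝ :=
  ∑ a : α, Real.negMulLog ((μ (X ⁻¹' {a})).toReal)

/-- Conditional Shannon entropy `H(X | Y) = H(X, Y) − H(Y)`. -/
noncomputable def finCondEntropy {Ω : Type*} [MeasurableSpace Ω] {α β : Type*}
    [Fintype α] [Fintype β] (μ : Measure Ω) (X : Ω → α) (Y : Ω → β) : ℝ :=
  finEntropy μ (fun ω => (X ω, Y ω)) - finEntropy μ Y

/-- Conditional mutual information `I(X ; Y | Z) = H(X | Z) − H(X | (Y, Z))`. -/
noncomputable def finCondMutualInfo {Ω : Type*} [MeasurableSpace Ω] {α β γ : Type*}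
    [Fintype α] [Fintype β] [Fintype γ]
    (μ : Measure Ω) (X : Ω → α) (Y : Ω → β) (Z : Ω → γ) : ℝ :=
  finCondEntropy μ X Z - finCondEntropy μ X (fun ω => (Y ω, Z ω))

/-- Mutual information `I(X ; Y) = H(X) − H(X | Y)`. -/
noncomputable def finMutualInfo {Ω : Type*} [MeasurableSpace Ω] {α β : Type*}
    [Fintype α] [Fintype β] (μ : Measure Ω) (X : Ω → α) (Y : Ω → β) : ℝ :=
  finEntropy μ X - finCondEntropy μ X Y

open Real

/-!
Noising through an a.s. invertible recoding by an independent `ε` adds exactly `H(ε)` to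
entropy: `H(M, S*, T) = H(B, S, T) + H(ε)`, `H(S*, T) = H(S, T) + H(ε)` and
`H(ε, M, T) = H(B, T) + H(ε)`. Expanding both conditional mutual informations into joint
entropies, the first two reduce the difference to `H(M, T) − H(B, T)`, which is
`H(ε) − H(ε | M, T)` by the third. Nonnegativity is subadditivity of entropy, which is Jensen's
inequality for the concave `x ↦ −x log x` applied to the conditional distributions.
-/

lemma Finset.apply_sum_of_subsingleton_support {ι M N : Type*} [AddCommMonoid M]
    [AddCommMonoid N] {φ : M → N} (hφ : φ 0 = 0) {s : Finset ι} {p : ι → M}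
    (hp : ∀ i ∈ s, ∀ j ∈ s, p i ≠ 0 → p j ≠ 0 → i = j) :
    φ (∑ i ∈ s, p i) = ∑ i ∈ s, φ (p i) := by
  by_cases hex : ∃ i ∈ s, p i ≠ 0
  · obtain ⟨i, hi, hpi⟩ := hex
    have hzero : ∀ j ∈ s, j ≠ i → p j = 0 := fun j hj hji => by
      by_contra hpj
      exact hji (hp j hj i hi hpj hpi)
    rw [Finset.sum_eq_single_of_mem i hi hzero,
      Finset.sum_eq_single_of_mem i hi fun j hj hji => by rw [hzero j hj hji, hφ]]
  · push Not at hex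
    rw [Finset.sum_eq_zero hex, Finset.sum_eq_zero fun j hj => by rw [hex j hj, hφ], hφ]

lemma sum_negMulLog_le_sum_negMulLog_marginals {α β : Type*} [Fintype α] [Fintype β]
    {p : α × β → ℝ} (hp : ∀ x, 0 ≤ p x) (hsum : ∑ x, p x = 1) :
    ∑ x, negMulLog (p x)
      ≤ ∑ a, negMulLog (∑ b, p (a, b)) + ∑ b, negMulLog (∑ a, p (a, b)) := by
  set pA : α → ℝ := fun a => ∑ b, p (a, b)
  have hpA : ∀ a, 0 ≤ pA a := fun a => Finset.sum_nonneg fun b _ => hp _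
  have hpA_sum : ∑ a, pA a = 1 := by rw [← hsum, Fintype.sum_prod_type]
  have hp_eq_zero : ∀ a b, pA a = 0 → p (a, b) = 0 := fun a b h =>
    (Finset.sum_eq_zero_iff_of_nonneg fun b _ => hp _).1 h b (Finset.mem_univ b)
  have hchain : ∀ a, ∑ b, negMulLog (p (a, b))
      = negMulLog (pA a) + ∑ b, pA a * negMulLog (p (a, b) / pA a) := by
    intro a
    rcases eq_or_ne (pA a) 0 with h0 | h0
    · simp [h0, hp_eq_zero a _ h0]
    · have hsplit : ∀ b, negMulLog (p (a, b))
          = p (a, b) / pA a * negMulLog (pA a) + pA a * negMulLog (p (a, b) / pA a) :=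
        fun b => by rw [← negMulLog_mul, mul_div_cancel₀ _ h0]
      rw [Finset.sum_congr rfl fun b _ => hsplit b, Finset.sum_add_distrib, ← Finset.sum_mul,
        ← Finset.sum_div, div_self h0, one_mul]
  have hjensen : ∀ b, ∑ a, pA a * negMulLog (p (a, b) / pA a) ≤ negMulLog (∑ a, p (a, b)) := by
    intro b
    -- `x / 0 = 0` is harmless here: a row with `pA a = 0` vanishes identically.
    have hcancel : ∀ a, pA a * (p (a, b) / pA a) = p (a, b) := fun a => by
      rcases eq_or_ne (pA a) 0 with h0 | h0
      · simp [h0, hp_eq_zero a b h0]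
      · exact mul_div_cancel₀ _ h0
    simpa only [smul_eq_mul, hcancel] using concaveOn_negMulLog.le_map_sum
      (fun a _ => hpA a) hpA_sum fun a _ => Set.mem_Ici.2 (div_nonneg (hp (a, b)) (hpA a))
  calc ∑ x, negMulLog (p x)
      = ∑ a, negMulLog (pA a) + ∑ b, ∑ a, pA a * negMulLog (p (a, b) / pA a) := by
        rw [Fintype.sum_prod_type, Finset.sum_congr rfl fun a _ => hchain a,
          Finset.sum_add_distrib, Finset.sum_comm (s := Finset.univ (α := α))]
    _ ≤ _ := by gcongr with b; exact hjensen b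

section FiniteRandomVariables

variable {Ω α β γ : Type*} [MeasurableSpace Ω] {μ : Measure Ω}

lemma finEntropy_eq_sum_negMulLog_measureReal [Fintype α] (μ : Measure Ω) (X : Ω → α) :
    finEntropy μ X = ∑ a, negMulLog (μ.real (X ⁻¹' {a})) := rfl

variable [Fintype α] [MeasurableSpace α] [MeasurableSingletonClass α] {X : Ω → α}

lemma measureReal_comp_preimage_singleton [IsFiniteMeasure μ] [DecidableEq β]
    (hX : Measurable X) (c : α → β) (b : β) :
    μ.real ((fun ω => c (X ω)) ⁻¹' {b}) = ∑ a with c a = b, μ.real (X ⁻¹' {a}) := by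
  rw [sum_measureReal_preimage_singleton _ fun a _ => hX (measurableSet_singleton a)]
  congr 1
  ext ω
  simp

lemma sum_measureReal_preimage_singleton_eq_one [IsProbabilityMeasure μ] (hX : Measurable X) :
    ∑ a, μ.real (X ⁻¹' {a}) = 1 := by
  rw [sum_measureReal_preimage_singleton _ fun a _ => hX (measurableSet_singleton a)]
  simp

lemma finEntropy_comp_of_ae_leftInverse [IsFiniteMeasure μ] [Fintype β] (hX : Measurable X)
    {c : α → β} {d : β → α} (hcd : ∀ᵐ ω ∂μ, d (c (X ω)) = X ω) :
    finEntropy μ (fun ω => c (X ω)) = finEntropy μ X := by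
  classical
  have hinj : ∀ a, μ.real (X ⁻¹' {a}) ≠ 0 → d (c a) = a := by
    intro a ha
    by_contra hne
    refine ha ((measureReal_eq_zero_iff).2 (measure_mono_null (fun ω hω => ?_) (ae_iff.1 hcd)))
    simp_all
  rw [finEntropy_eq_sum_negMulLog_measureReal, finEntropy_eq_sum_negMulLog_measureReal,
    ← Finset.sum_fiberwise Finset.univ c]
  refine Finset.sum_congr rfl fun b _ => ?_
  rw [measureReal_comp_preimage_singleton hX]
  refine Finset.apply_sum_of_subsingleton_support negMulLog_zero fun i hi j hj hi0 hj0 => ?_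
  rw [Finset.mem_filter] at hi hj
  rw [← hinj i hi0, ← hinj j hj0, hi.2, hj.2]

variable [Fintype β] [MeasurableSpace β] [MeasurableSingletonClass β] {Y : Ω → β}

lemma finEntropy_prod_of_indepFun [IsProbabilityMeasure μ] (hX : Measurable X)
    (hY : Measurable Y) (hXY : IndepFun X Y μ) :
    finEntropy μ (fun ω => (X ω, Y ω)) = finEntropy μ X + finEntropy μ Y := by
  have hmul : ∀ a b, μ.real ((fun ω => (X ω, Y ω)) ⁻¹' {(a, b)})
      = μ.real (X ⁻¹' {a}) * μ.real (Y ⁻¹' {b}) := fun a b => by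
    rw [← Set.singleton_prod_singleton, Set.mk_preimage_prod, measureReal_def,
      hXY.measure_inter_preimage_eq_mul _ _ (measurableSet_singleton a)
        (measurableSet_singleton b), ENNReal.toReal_mul, measureReal_def, measureReal_def]
  simp only [finEntropy_eq_sum_negMulLog_measureReal, Fintype.sum_prod_type, hmul, negMulLog_mul,
    Finset.sum_add_distrib, ← Finset.sum_mul, ← Finset.mul_sum,
    sum_measureReal_preimage_singleton_eq_one hX, sum_measureReal_preimage_singleton_eq_one hY]
  ring

lemma sum_measureReal_preimage_prodMk_singleton [IsFiniteMeasure μ] (hX : Measurable X)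
    (hY : Measurable Y) (a : α) :
    ∑ b, μ.real ((fun ω => (X ω, Y ω)) ⁻¹' {(a, b)}) = μ.real (X ⁻¹' {a}) := by
  classical
  rw [show X = fun ω => ((X ω, Y ω)).1 from rfl,
    measureReal_comp_preimage_singleton (hX.prodMk hY) Prod.fst a]
  simp only [Finset.sum_filter, Fintype.sum_prod_type]
  rw [Finset.sum_comm]
  simp

lemma finEntropy_prod_le [IsProbabilityMeasure μ] (hX : Measurable X) (hY : Measurable Y) :
    finEntropy μ (fun ω => (X ω, Y ω)) ≤ finEntropy μ X + finEntropy μ Y := by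
  have hsnd : ∀ b, ∑ a, μ.real ((fun ω => (X ω, Y ω)) ⁻¹' {(a, b)}) = μ.real (Y ⁻¹' {b}) := by
    intro b
    rw [← sum_measureReal_preimage_prodMk_singleton hY hX b]
    congr! 2 with a
    ext ω
    simp [and_comm]
  simpa only [finEntropy_eq_sum_negMulLog_measureReal,
      sum_measureReal_preimage_prodMk_singleton (μ := μ) hX hY, hsnd]
    using sum_negMulLog_le_sum_negMulLog_marginals (fun _ => measureReal_nonneg)
      (sum_measureReal_preimage_singleton_eq_one (μ := μ) (hX.prodMk hY))

lemma finEntropy_comp_of_indepFun [IsProbabilityMeasure μ] [Fintype γ] (hX : Measurable X)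
    (hY : Measurable Y) (hXY : IndepFun X Y μ) {c : α × β → γ} {d : γ → α × β}
    (hcd : ∀ᵐ ω ∂μ, d (c (X ω, Y ω)) = (X ω, Y ω)) :
    finEntropy μ (fun ω => c (X ω, Y ω)) = finEntropy μ X + finEntropy μ Y := by
  rw [finEntropy_comp_of_ae_leftInverse (hX.prodMk hY) hcd, finEntropy_prod_of_indepFun hX hY hXY]

end FiniteRandomVariables

/-- **Label-shift noise increases target–support dependence by `H(ε) − H(ε | M, T)`.**
Suppose (i) `ε` is independent of `(B, S, T)`, (ii) `M := f(B, ε)` satisfies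
`B = g(M, ε)` a.s., and (iii) `S* := k(S, ε)` satisfies `(S, ε) = h(S*)` a.s.  Then
`I(M ; S* | T) − I(B ; S | T) = H(ε) − H(ε | (M, T)) ≥ 0`. -/
theorem label_shift_information_increase
    {Ω : Type*} [MeasurableSpace Ω] (μ : Measure Ω) [IsProbabilityMeasure μ]
    {αB αS αT αE αM αS' : Type*}
    [Fintype αB] [Fintype αS] [Fintype αT] [Fintype αE] [Fintype αM] [Fintype αS']
    [MeasurableSpace αB] [MeasurableSingletonClass αB]
    [MeasurableSpace αS] [MeasurableSingletonClass αS]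
    [MeasurableSpace αT] [MeasurableSingletonClass αT]
    [MeasurableSpace αE] [MeasurableSingletonClass αE]
    (B : Ω → αB) (S : Ω → αS) (T : Ω → αT) (ε : Ω → αE)
    (hB : Measurable B) (hS : Measurable S) (hT : Measurable T) (hε : Measurable ε)
    (hindep : IndepFun ε (fun ω => (B ω, S ω, T ω)) μ)
    (f : αB × αE → αM) (g : αM × αE → αB)
    (hg : ∀ᵐ ω ∂μ, B ω = g (f (B ω, ε ω), ε ω))
    (k : αS × αE → αS') (h : αS' → αS × αE)
    (hh : ∀ᵐ ω ∂μ, (S ω, ε ω) = h (k (S ω, ε ω))) :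
    finCondMutualInfo μ (fun ω => f (B ω, ε ω)) (fun ω => k (S ω, ε ω)) T
        - finCondMutualInfo μ B S T
        = finEntropy μ ε - finCondEntropy μ ε (fun ω => (f (B ω, ε ω), T ω))
      ∧ 0 ≤ finEntropy μ ε - finCondEntropy μ ε (fun ω => (f (B ω, ε ω), T ω)) := by
  let : MeasurableSpace αM := ⊤
  have hM : Measurable fun ω => f (B ω, ε ω) := (measurable_of_countable f).comp (hB.prodMk hε)
  have hMST : finEntropy μ (fun ω => (f (B ω, ε ω), k (S ω, ε ω), T ω))
      = finEntropy μ (fun ω => (B ω, S ω, T ω)) + finEntropy μ ε :=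
    finEntropy_comp_of_indepFun (hB.prodMk (hS.prodMk hT)) hε hindep.symm
      (c := fun x => (f (x.1.1, x.2), k (x.1.2.1, x.2), x.1.2.2))
      (d := fun y => ((g (y.1, (h y.2.1).2), (h y.2.1).1, y.2.2), (h y.2.1).2))
      (by filter_upwards [hg, hh] with ω hgω hhω; simp [← hhω, ← hgω])
  have hST : finEntropy μ (fun ω => (k (S ω, ε ω), T ω))
      = finEntropy μ (fun ω => (S ω, T ω)) + finEntropy μ ε :=
    finEntropy_comp_of_indepFun (hS.prodMk hT) hε
      (hindep.symm.comp (measurable_of_countable fun x : αB × αS × αT => x.2) measurable_id)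
      (c := fun x => (k (x.1.1, x.2), x.1.2))
      (d := fun y => (((h y.1).1, y.2), (h y.1).2))
      (by filter_upwards [hh] with ω hhω; simp [← hhω])
  have hEMT : finEntropy μ (fun ω => (ε ω, f (B ω, ε ω), T ω))
      = finEntropy μ (fun ω => (B ω, T ω)) + finEntropy μ ε :=
    finEntropy_comp_of_indepFun (hB.prodMk hT) hε
      (hindep.symm.comp (measurable_of_countable fun x : αB × αS × αT => (x.1, x.2.2))
        measurable_id)
      (c := fun x => (x.2, f (x.1.1, x.2), x.1.2))
      (d := fun y => ((g (y.2.1, y.1), y.2.2), y.1))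
      (by filter_upwards [hg] with ω hgω; simp [← hgω])
  have hsub := finEntropy_prod_le (μ := μ) hε (hM.prodMk hT)
  simp only [finCondMutualInfo, finCondEntropy]
  exact ⟨by linarith, by linarith⟩
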